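/- arXiv:2504.21653 — 3 statements merged into one kernel-verified Lean document; each statement's English description precedes it below -/
import Mathlib

section
/- Let T be a tournament and u, v distinct vertices with d⁺(u) ≥ d⁺(v). If there is an arc from v to u, then p₂(u,v) + p₂(v,u) ≥ 2·π₂(T) + |d⁺(u) − d⁺(v) + 1|, where π₂(T) is the minimum of p₂(x,y) over all ordered pairs of distinct vertices x, y. -/
/-!
Sorting the out-neighbours of `u` and of `v` by their arc to the other one gives
`d⁺(u) = p₂(u,v) + c` and `d⁺(v) = p₂(v,u) + c + 1`, where `c` counts the common
out-neighbours. Hence `d⁺(u) − d⁺(v) + 1 = p₂(u,v) − p₂(v,u) ≥ 1`, and `π₂ ≤ p₂(v,u)`.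
-/

open Finset

variable {V : Type*} [Fintype V] [DecidableEq V]

/-- A tournament: irreflexive, and between any two distinct vertices exactly one arc. -/
def IsTournament (r : V → V → Prop) : Prop :=
  (∀ u, ¬ r u u) ∧ ∀ u v : V, u ≠ v → Xor' (r u v) (r v u)

/-- Out-degree. -/
def outDeg (r : V → V → Prop) [DecidableRel r] (u : V) : ℕ :=
  (Finset.univ.filter fun v => r u v).card

/-- In-degree. -/
def inDeg (r : V → V → Prop) [DecidableRel r] (u : V) : ℕ :=
  (Finset.univ.filter fun v => r v u).card

/-- Number of directed 2-paths from `u` to `v`. -/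
def p2 (r : V → V → Prop) [DecidableRel r] (u v : V) : ℕ :=
  (Finset.univ.filter fun w => r u w ∧ r w v).card

/-- `π` is the minimum of `p2` over ordered pairs of distinct vertices. -/
def IsPi2 (r : V → V → Prop) [DecidableRel r] (π : ℕ) : Prop :=
  (∀ x y : V, x ≠ y → π ≤ p2 r x y) ∧ ∃ x y : V, x ≠ y ∧ p2 r x y = π

/-- `i` is the irregularity: the maximum of |d⁺(u) − d⁻(u)|. -/
def IsIrreg (r : V → V → Prop) [DecidableRel r] (i : ℕ) : Prop :=
  (∀ u : V, ((outDeg r u : ℤ) - inDeg r u).natAbs ≤ i) ∧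
    ∃ u : V, ((outDeg r u : ℤ) - inDeg r u).natAbs = i

/-- A directed path, as a duplicate-free list whose consecutive members are arcs. -/
def IsDirPath (r : V → V → Prop) (l : List V) : Prop :=
  l.Nodup ∧ l.Chain' r

/-- A path is extendable if some path with the same endpoints uses its vertices plus one more. -/
def Extendable (r : V → V → Prop) (l : List V) : Prop :=
  ∃ w ∉ l.toFinset, ∃ l' : List V, IsDirPath r l' ∧ l'.head? = l.head? ∧
    l'.getLast? = l.getLast? ∧ l'.toFinset = insert w l.toFinset

/-- Every nonhamiltonian path (on at least two vertices) is extendable. -/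
def PathExtendable (r : V → V → Prop) : Prop :=
  ∀ l : List V, IsDirPath r l → 2 ≤ l.length →
    l.toFinset ≠ Finset.univ → Extendable r l

namespace IsTournament

theorem asymm {α : Type*} {r : α → α → Prop} (hT : IsTournament r) {x y : α} (h : r x y) :
    ¬ r y x := by
  have hxy : x ≠ y := by rintro rfl; exact hT.1 x h
  rcases hT.2 x y hxy with ⟨-, h'⟩ | ⟨-, h'⟩
  · exact h'
  · exact absurd h h'

theorem rel_or_rel {α : Type*} {r : α → α → Prop} (hT : IsTournament r) {x y : α}
    (hxy : x ≠ y) : r x y ∨ r y x :=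
  (hT.2 x y hxy).imp And.left And.left

variable {r : V → V → Prop}

theorem outDeg_eq_p2_add [DecidableRel r] (hT : IsTournament r) {x y : V} (hxy : x ≠ y) :
    outDeg r x = p2 r x y + (univ.filter fun w => r x w ∧ r y w).card +
      if r x y then 1 else 0 := by
  simp only [outDeg, p2, card_filter]
  have hy : (if r x y then 1 else 0) = ∑ w, if w = y then (if r x y then 1 else 0) else 0 := by
    simp
  rw [← sum_add_distrib, hy, ← sum_add_distrib]
  refine sum_congr rfl fun w _ => ?_
  by_cases hwy : w = y
  · subst hwy
    simp [hT.1 w]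
  · have := hT.rel_or_rel hwy
    by_cases hxw : r x w <;> by_cases hwy' : r w y <;>
      simp_all [hT.asymm]

theorem outDeg_sub_outDeg_add_one_eq_p2_sub_p2 [DecidableRel r] (hT : IsTournament r) {u v : V}
    (harc : r v u) : (outDeg r u : ℤ) - outDeg r v + 1 = p2 r u v - p2 r v u := by
  have huv : u ≠ v := by rintro rfl; exact hT.1 u harc
  have hu := hT.outDeg_eq_p2_add huv
  have hv := hT.outDeg_eq_p2_add huv.symm
  have hcommon : (univ.filter fun w => r v w ∧ r u w) = univ.filter fun w => r u w ∧ r v w :=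
    filter_congr fun _ _ => and_comm
  rw [if_neg (hT.asymm harc)] at hu
  rw [if_pos harc, hcommon] at hv
  omega

end IsTournament

theorem stmt3 (r : V → V → Prop) [DecidableRel r] (hT : IsTournament r)
    (π : ℕ) (hπ : IsPi2 r π) (u v : V) (huv : u ≠ v)
    (hdeg : outDeg r v ≤ outDeg r u) (harc : r v u) :
    (2 * π : ℤ) + |(outDeg r u : ℤ) - outDeg r v + 1| ≤ (p2 r u v : ℤ) + p2 r v u := by
  have hdiff := hT.outDeg_sub_outDeg_add_one_eq_p2_sub_p2 harc
  have hmin : π ≤ p2 r v u := hπ.1 v u huv.symm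
  rw [abs_of_nonneg (by omega)]
  omega
end

section
/- In any tournament T on n vertices with n ≥ 3, π₂(T) ≤ (n−3)/4, i.e., 4·π₂(T) ≤ n − 3. -/
/-!
A tournament on `m` vertices has `m(m - 1)/2` arcs, so some vertex has in-degree (or, dually,
out-degree) at most `(m - 1)/2`. Take `x` with out-degree `d ≤ (n - 1)/2`, then `y` of in-degree at most
`(d - 1)/2` inside the out-neighbourhood `A` of `x`. The 2-paths from `x` to `y` are exactly the arcs
into `y` from `A`, hence `4π₂ ≤ 2(d - 1) ≤ n - 3` (and `π₂ = 0` if `d = 0`).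
-/

open Finset

variable {V : Type*} [Fintype V] [DecidableEq V]

namespace IsTournament

variable {α : Type*} {r : α → α → Prop}

lemma swap (hT : IsTournament r) : IsTournament fun u v => r v u :=
  ⟨hT.1, fun u v huv => (hT.2 u v huv).symm⟩

lemma ne_of_rel (hT : IsTournament r) {u v : α} (h : r u v) : u ≠ v :=
  fun huv => hT.1 u (huv ▸ h)

variable [DecidableEq α] [DecidableRel r]

lemma card_filter_rel_add_card_filter_rel (hT : IsTournament r) (s : Finset α) (y : α) :
    #{w ∈ s | r w y} + #{w ∈ s | r y w} = #(s.erase y) := by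
  rw [← card_union_of_disjoint]
  · congr 1
    ext w
    simp only [mem_union, mem_filter, mem_erase]
    constructor
    · rintro (⟨hs, h⟩ | ⟨hs, h⟩)
      exacts [⟨hT.ne_of_rel h, hs⟩, ⟨(hT.ne_of_rel h).symm, hs⟩]
    · rintro ⟨hne, hs⟩
      rcases hT.2 w y hne with ⟨h, -⟩ | ⟨h, -⟩
      exacts [Or.inl ⟨hs, h⟩, Or.inr ⟨hs, h⟩]
  · refine disjoint_left.mpr fun w hwy hyw => ?_
    have hne := hT.ne_of_rel (mem_filter.mp hwy).2
    rcases hT.2 w y hne with ⟨-, h⟩ | ⟨-, h⟩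
    exacts [h (mem_filter.mp hyw).2, h (mem_filter.mp hwy).2]

lemma two_mul_sum_card_filter_rel (hT : IsTournament r) (s : Finset α) :
    2 * ∑ z ∈ s, #{w ∈ s | r w z} = #s * (#s - 1) := by
  have hinOut : ∑ z ∈ s, #{w ∈ s | r w z} = ∑ z ∈ s, #{w ∈ s | r z w} := by
    simp only [card_filter]
    exact sum_comm
  have hsum : ∑ z ∈ s, (#{w ∈ s | r w z} + #{w ∈ s | r z w}) = #s * (#s - 1) := by
    rw [sum_congr rfl fun z hz => by
      rw [hT.card_filter_rel_add_card_filter_rel s z, card_erase_of_mem hz], sum_const, smul_eq_mul]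
  rw [sum_add_distrib, ← hinOut] at hsum
  omega

lemma exists_two_mul_card_filter_rel_le (hT : IsTournament r) {s : Finset α} (hs : s.Nonempty) :
    ∃ y ∈ s, 2 * #{w ∈ s | r w y} ≤ #s - 1 := by
  refine exists_le_of_sum_le hs ?_
  rw [← mul_sum, hT.two_mul_sum_card_filter_rel, sum_const, smul_eq_mul]

end IsTournament

section Paths

variable {α : Type*} [Fintype α] (r : α → α → Prop) [DecidableRel r]

lemma p2_eq_card_filter_outNeighbour (x y : α) :
    p2 r x y = #{w ∈ {v | r x v} | r w y} := by
  rw [filter_filter]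
  rfl

lemma p2_le_outDeg (x y : α) : p2 r x y ≤ outDeg r x :=
  card_le_card fun _ hw => mem_filter.mpr ⟨mem_univ _, (mem_filter.mp hw).2.1⟩

end Paths

theorem stmt4_general (r : V → V → Prop) [DecidableRel r] (hT : IsTournament r)
    (π : ℕ) (hπ : IsPi2 r π) :
    4 * π ≤ Fintype.card V - 3 := by
  obtain ⟨x₀, y₀, hne₀, -⟩ := hπ.2
  have : Nontrivial V := ⟨⟨x₀, y₀, hne₀⟩⟩
  obtain ⟨x, -, hx⟩ := hT.swap.exists_two_mul_card_filter_rel_le (univ_nonempty (α := V))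
  have hdeg : 2 * outDeg r x ≤ Fintype.card V - 1 := hx
  rcases ({v | r x v} : Finset V).eq_empty_or_nonempty with hA | hA
  · obtain ⟨y, hy⟩ := exists_ne x
    have hxy := p2_le_outDeg r x y
    have hπxy := hπ.1 x y hy.symm
    have hd : outDeg r x = 0 := card_eq_zero.mpr hA
    omega
  · obtain ⟨y, hyA, hy⟩ := hT.exists_two_mul_card_filter_rel_le hA
    have hπxy := hπ.1 x y (hT.ne_of_rel (mem_filter.mp hyA).2)
    rw [p2_eq_card_filter_outNeighbour] at hπxy
    have hd : outDeg r x = #{v | r x v} := rfl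
    omega

theorem stmt4 (r : V → V → Prop) [DecidableRel r] (hT : IsTournament r)
    (hn : 3 ≤ Fintype.card V) (π : ℕ) (hπ : IsPi2 r π) :
    4 * π ≤ Fintype.card V - 3 :=
  stmt4_general r hT π hπ
end

section
/- Let T be a tournament on n vertices, W ⊆ V(T), and define the surplus s(W) = Σ over unordered pairs {u,v} ⊆ W of (p₂(u,v) + p₂(v,u) − 2π₂(T)). Then s(W) ≥ C(|W|,2) − ⌊|W|/2⌋·⌈|W|/2⌉. -/
open Finset

variable {V : Type*} [Fintype V] [DecidableEq V]

/-!
Counting out-neighbours of `u` according to their arc with `v` gives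
`d⁺(u) + d⁺(v) = p₂(u,v) + p₂(v,u) + 2·|N⁺(u) ∩ N⁺(v)| + 1`. Hence `p₂(u,v) + p₂(v,u)` is odd,
so strictly larger than `2π₂`, whenever `d⁺(u)` and `d⁺(v)` have the same parity. Only pairs of
opposite parity can have zero surplus, and `W` has at most `⌊|W|/2⌋·⌈|W|/2⌉` of them.
-/

theorem Nat.mul_le_div_two_mul_add_one_div_two (a b : ℕ) :
    a * b ≤ (a + b) / 2 * ((a + b + 1) / 2) := by
  rcases Nat.even_or_odd' (a + b) with ⟨m, hm | hm⟩
  · rw [show (a + b) / 2 = m by omega, show (a + b + 1) / 2 = m by omega]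
    zify at hm ⊢
    nlinarith [sq_nonneg ((a : ℤ) - b)]
  · rw [show (a + b) / 2 = m by omega, show (a + b + 1) / 2 = m + 1 by omega]
    zify at hm ⊢
    nlinarith [sq_nonneg ((a : ℤ) - b)]

theorem Finset.sum_offDiag_comm {α M : Type*} [DecidableEq α] [AddCommMonoid M]
    (s : Finset α) (f : α → α → M) :
    ∑ x ∈ s.offDiag, f x.1 x.2 = ∑ x ∈ s.offDiag, f x.2 x.1 :=
  Finset.sum_equiv (Equiv.prodComm α α) (by simp; tauto) (by simp)

theorem Finset.two_mul_choose_two_le_card_offDiag_filter_iff_add {α : Type*} [DecidableEq α]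
    (s : Finset α) (P : α → Prop) [DecidablePred P] :
    2 * (#s).choose 2 ≤
      #{x ∈ s.offDiag | P x.1 ↔ P x.2} + 2 * (#s / 2 * ((#s + 1) / 2)) := by
  set A := {x ∈ s | P x}
  set B := {x ∈ s | ¬ P x}
  have hsplit : #{x ∈ s.offDiag | P x.1 ↔ P x.2} + #{x ∈ s.offDiag | ¬(P x.1 ↔ P x.2)} =
      #s * #s - #s := by
    rw [card_filter_add_card_filter_not, offDiag_card]
  have hsub : {x ∈ s.offDiag | ¬(P x.1 ↔ P x.2)} ⊆ A ×ˢ B ∪ B ×ˢ A := by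
    intro x hx
    simp only [mem_filter, mem_offDiag] at hx
    simp only [mem_union, mem_product, A, B, mem_filter]
    tauto
  have hmixed : #{x ∈ s.offDiag | ¬(P x.1 ↔ P x.2)} ≤ 2 * (#A * #B) := by
    calc _ ≤ #(A ×ˢ B ∪ B ×ˢ A) := card_le_card hsub
      _ ≤ #(A ×ˢ B) + #(B ×ˢ A) := card_union_le _ _
      _ = #A * #B + #B * #A := by rw [card_product, card_product]
      _ = 2 * (#A * #B) := by ring
  have hAB : #A * #B ≤ #s / 2 * ((#s + 1) / 2) := by
    simpa only [A, B, card_filter_add_card_filter_not] using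
      Nat.mul_le_div_two_mul_add_one_div_two #A #B
  have hchoose : 2 * (#s).choose 2 = #s * #s - #s := by
    rw [Nat.choose_two_right, Nat.mul_div_cancel' (Nat.even_mul_pred_self _).two_dvd,
      Nat.mul_sub_one]
  omega

section Tournament

variable {r : V → V → Prop} [DecidableRel r]

theorem outDeg_eq_p2_add_card_add_ite (hT : IsTournament r) {u v : V} :
    outDeg r u = p2 r u v + #{w | r u w ∧ r v w} + if r u v then 1 else 0 := by
  have hv : (if r u v then 1 else 0) = ∑ w, if r u w ∧ w = v then 1 else 0 := by
    rw [Fintype.sum_eq_single v fun w hw => by simp [hw]]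
    simp
  simp only [outDeg, p2, card_filter, hv, ← sum_add_distrib]
  refine sum_congr rfl fun w _ => ?_
  by_cases hwv : w = v
  · subst hwv
    simp [hT.1]
  · rcases hT.2 w v hwv with ⟨h, h'⟩ | ⟨h, h'⟩ <;> simp [h, h', hwv]

theorem outDeg_add_outDeg_eq (hT : IsTournament r) {u v : V} (huv : u ≠ v) :
    outDeg r u + outDeg r v = p2 r u v + p2 r v u + 2 * #{w | r u w ∧ r v w} + 1 := by
  rw [outDeg_eq_p2_add_card_add_ite hT (v := v), outDeg_eq_p2_add_card_add_ite hT (v := u)]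
  have hcomm : #{w | r v w ∧ r u w} = #{w | r u w ∧ r v w} := by simp only [and_comm]
  rcases hT.2 u v huv with ⟨h, h'⟩ | ⟨h, h'⟩ <;> simp only [h, h', hcomm, if_true, if_false] <;> omega

theorem odd_p2_add_p2 (hT : IsTournament r) {u v : V} (huv : u ≠ v)
    (hpar : Even (outDeg r u) ↔ Even (outDeg r v)) :
    Odd (p2 r u v + p2 r v u) := by
  have heven : Even (outDeg r u + outDeg r v) := Nat.even_add.2 hpar
  rw [outDeg_add_outDeg_eq hT huv, Nat.even_iff] at heven
  rw [Nat.odd_iff]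
  omega

end Tournament

theorem stmt12 (r : V → V → Prop) [DecidableRel r] (hT : IsTournament r)
    (π : ℕ) (hπ : IsPi2 r π) (W : Finset V) :
    (Nat.choose W.card 2 : ℤ) - (W.card / 2 : ℕ) * ((W.card + 1) / 2 : ℕ) ≤
      ∑ p ∈ W.offDiag, ((p2 r p.1 p.2 : ℤ) - π) := by
  set E := fun v => Even (outDeg r v)
  have hsymm : 2 * ∑ p ∈ W.offDiag, ((p2 r p.1 p.2 : ℤ) - π) =
      ∑ p ∈ W.offDiag, ((p2 r p.1 p.2 + p2 r p.2 p.1 : ℤ) - 2 * π) := by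
    rw [two_mul]
    nth_rw 2 [sum_offDiag_comm W (fun x y => (p2 r x y : ℤ) - π)]
    rw [← sum_add_distrib]
    exact sum_congr rfl fun _ _ => by ring
  -- An odd number at least `2π` exceeds `2π`.
  have hpair : ∀ p ∈ W.offDiag, (if E p.1 ↔ E p.2 then 1 else 0 : ℤ) ≤
      (p2 r p.1 p.2 + p2 r p.2 p.1 : ℤ) - 2 * π := by
    intro p hp
    obtain ⟨-, -, huv⟩ := mem_offDiag.1 hp
    have hu := hπ.1 p.1 p.2 huv
    have hv := hπ.1 p.2 p.1 huv.symm
    split_ifs with hpar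
    · obtain ⟨k, hk⟩ := odd_p2_add_p2 hT huv hpar
      omega
    · omega
  have hcount := W.two_mul_choose_two_le_card_offDiag_filter_iff_add E
  have hsame : (#{p ∈ W.offDiag | E p.1 ↔ E p.2} : ℤ) ≤
      2 * ∑ p ∈ W.offDiag, ((p2 r p.1 p.2 : ℤ) - π) := by
    rw [hsymm, ← sum_boole]
    exact sum_le_sum hpair
  push_cast
  zify at hcount
  linarith
end
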